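/- Violation preservation: if an interleaving of program P violates an assertion a at an edge (u,a,v) taken by thread t, then the ghost-instrumented interleaving π_ghost(i) of the witness-instrumented program P_W violates the same assertion a at the edge δ_W(u,a,v) taken by t. Consequently, if the ghost witness W is valid (P_W is safe w.r.t. interleaving semantics) then P is safe. -/

import Mathlib

/-!
Each step `(u, a, v)` of a thread of `P` is replayed in `P_W` by the invariant block at `u`
(when `Ψ_W u` is defined) followed by the instrumented edge `δ_W (u, a, v)`. Since the witness is
well formed, ghost statements change neither program variables, mutexes, thread counters nor the
original location, so the projection `π_P` of the replaying state of `P_W` is the state of `P`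
after every step. At a violating step the lifted assertion is therefore evaluated on the same
program-local state and fails as well; safety of `P_W` then excludes violations in `P`.
-/

namespace CW

/-- Thread ids are finite sequences of naturals (creation histories). -/
abbrev TID := List Nat

/-- Actions of the core language `Lang`. -/
inductive Act (Mutex Global L V : Type) : Type where
  | lock (m : Mutex)
  | unlock (m : Mutex)
  | create (tmpl : Nat)
  | localUpd (f : L → L)
  | read (g : Global) (f : L → V → L)
  | write (g : Global) (f : L → V)
  | assert (p : L → Bool)
  | pos (c : L → Bool)
  | neg (c : L → Bool)

/-- A program: thread templates (numbered CFGs, template 0 is `main`),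
    start nodes, initial local state and initial values of globals. -/
structure Prog (Node Mutex Global L V : Type) where
  edges : Nat → Node → Act Mutex Global L V → Node → Prop
  start : Nat → Node
  initLocal : L
  initGlobal : Global → V

/-- A configuration `(L, M, G)`: thread map (template, node, local state, create counter),
    mutex ownership map, and values of globals. -/
structure Config (Node Mutex Global L V : Type) where
  threads : TID → Option (Nat × Node × L × Nat)
  mutexes : Mutex → Option TID
  globals : Global → V

variable {Node Mutex Global L V : Type}

/-- The canonical initial configuration. -/
def initConfig (P : Prog Node Mutex Global L V) : Config Node Mutex Global L V where
  threads := fun t => if t = ([] : TID) then some (0, P.start 0, P.initLocal, 0) else none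
  mutexes := fun _ => none
  globals := P.initGlobal

/-- The initial-state condition: only the initial thread exists, at the start node of main
    with the initial local state, no mutex held, globals at declared initial values. -/
def IsInitGen (startF : Nat → Node) (l0 : L) (g0 : Global → V)
    (c : Config Node Mutex Global L V) : Prop :=
  (∀ t : TID, c.threads t = if t = ([] : TID) then some (0, startF 0, l0, 0) else none) ∧
  (∀ m, c.mutexes m = none) ∧ (∀ g, c.globals g = g0 g)

def IsInit (P : Prog Node Mutex Global L V) (c : Config Node Mutex Global L V) : Prop :=
  IsInitGen P.start P.initLocal P.initGlobal c

/-- Admissibility of an action for a thread with local state `l` and create counter `cnt`. -/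
def admissibleAct (c : Config Node Mutex Global L V) (t : TID) (l : L) (cnt : Nat) :
    Act Mutex Global L V → Prop
  | .lock m => c.mutexes m = none
  | .unlock m => c.mutexes m = some t
  | .create _ => c.threads (t ++ [cnt]) = none
  | .pos p => p l = true
  | .neg p => p l = false
  | _ => True

variable [DecidableEq Mutex] [DecidableEq Global]

/-- The effect of action `a` taken by thread `t` moving to node `v`. -/
def applyAct (startF : Nat → Node) (l0 : L) (c : Config Node Mutex Global L V)
    (t : TID) (tmpl : Nat) (v : Node) (l : L) (cnt : Nat) :
    Act Mutex Global L V → Config Node Mutex Global L V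
  | .lock m =>
      { threads := Function.update c.threads t (some (tmpl, v, l, cnt)),
        mutexes := Function.update c.mutexes m (some t),
        globals := c.globals }
  | .unlock m =>
      { threads := Function.update c.threads t (some (tmpl, v, l, cnt)),
        mutexes := Function.update c.mutexes m none,
        globals := c.globals }
  | .create k =>
      { threads := Function.update
          (Function.update c.threads t (some (tmpl, v, l, cnt + 1)))
          (t ++ [cnt]) (some (k, startF k, l0, 0)),
        mutexes := c.mutexes, globals := c.globals }
  | .localUpd f =>
      { threads := Function.update c.threads t (some (tmpl, v, f l, cnt)),
        mutexes := c.mutexes, globals := c.globals }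
  | .read g f =>
      { threads := Function.update c.threads t (some (tmpl, v, f l (c.globals g), cnt)),
        mutexes := c.mutexes, globals := c.globals }
  | .write g f =>
      { threads := Function.update c.threads t (some (tmpl, v, l, cnt)),
        mutexes := c.mutexes,
        globals := Function.update c.globals g (f l) }
  | _ =>
      { threads := Function.update c.threads t (some (tmpl, v, l, cnt)),
        mutexes := c.mutexes, globals := c.globals }

/-- One consistent step of the interleaving semantics. -/
def Step (P : Prog Node Mutex Global L V) (c : Config Node Mutex Global L V) (t : TID)
    (e : Node × Act Mutex Global L V × Node) (c' : Config Node Mutex Global L V) : Prop :=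
  ∃ tmpl l cnt, c.threads t = some (tmpl, e.1, l, cnt) ∧
    P.edges tmpl e.1 e.2.1 e.2.2 ∧
    admissibleAct c t l cnt e.2.1 ∧
    c' = applyAct P.start P.initLocal c t tmpl e.2.2 l cnt e.2.1

/-- A consistent interleaving of `P`: a sequence of configurations connected by
    admissible thread-labeled steps, starting in the initial state. -/
structure Interleaving (P : Prog Node Mutex Global L V) where
  len : Nat
  states : Fin (len + 1) → Config Node Mutex Global L V
  who : Fin len → TID
  edge : Fin len → Node × Act Mutex Global L V × Node
  init : IsInit P (states 0)
  consistent : ∀ k : Fin len, Step P (states k.castSucc) (who k) (edge k) (states k.succ)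

/-- The assertion at step `k` of interleaving `i` is violated. -/
def Interleaving.ViolatesAt {P : Prog Node Mutex Global L V} (i : Interleaving P)
    (k : Fin i.len) : Prop :=
  ∃ p u v, i.edge k = (u, Act.assert p, v) ∧
    ∃ tmpl l cnt, (i.states k.castSucc).threads (i.who k) = some (tmpl, u, l, cnt) ∧ p l = false

/-- Safety w.r.t. the interleaving semantics. -/
def Safe (P : Prog Node Mutex Global L V) : Prop :=
  ∀ (i : Interleaving P) (k : Fin i.len), ¬ i.ViolatesAt k

/-- Actions of `Lang_Atomic`: base actions, and atomic blocks `atomic{a; rest}` whose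
first statement `a` is the only possibly inadmissible one. -/
inductive ActA (Mutex Global L V : Type) : Type where
  | base (a : Act Mutex Global L V)
  | atomic (a : Act Mutex Global L V) (rest : List (Act Mutex Global L V))

/-- Programs of `Lang_Atomic`. -/
structure ProgA (Node Mutex Global L V : Type) where
  edges : Nat → Node → ActA Mutex Global L V → Node → Prop
  start : Nat → Node
  initLocal : L
  initGlobal : Global → V

/-- Always-admissible statement kinds allowed inside the tail of an atomic block. -/
def Act.Simple : Act Mutex Global L V → Prop
  | .localUpd _ => True
  | .read _ _ => True
  | .write _ _ => True
  | .assert _ => True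
  | _ => False

/-- Apply one action of a thread `t` (keeping it at node `v`). -/
def applyOne (startF : Nat → Node) (l0 : L) (c : Config Node Mutex Global L V)
    (t : TID) (v : Node) (a : Act Mutex Global L V) : Config Node Mutex Global L V :=
  match c.threads t with
  | some (tmpl, _, l, cnt) => applyAct startF l0 c t tmpl v l cnt a
  | none => c

/-- Apply a sequence of actions of thread `t` in one atomic step. -/
def applyList (startF : Nat → Node) (l0 : L) (c : Config Node Mutex Global L V)
    (t : TID) (v : Node) (as_ : List (Act Mutex Global L V)) : Config Node Mutex Global L V :=
  as_.foldl (fun c a => applyOne startF l0 c t v a) c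

/-- One step of the interleaving semantics of `Lang_Atomic`; an atomic block is executed
as a whole, and is admissible iff its first statement is. -/
def StepA (P : ProgA Node Mutex Global L V) (c : Config Node Mutex Global L V) (t : TID)
    (e : Node × ActA Mutex Global L V × Node) (c' : Config Node Mutex Global L V) : Prop :=
  ∃ tmpl l cnt, c.threads t = some (tmpl, e.1, l, cnt) ∧
    P.edges tmpl e.1 e.2.1 e.2.2 ∧
    match e.2.1 with
    | .base a => admissibleAct c t l cnt a ∧
        c' = applyAct P.start P.initLocal c t tmpl e.2.2 l cnt a
    | .atomic a rest => admissibleAct c t l cnt a ∧ (∀ b ∈ rest, b.Simple) ∧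
        c' = applyList P.start P.initLocal
              (applyAct P.start P.initLocal c t tmpl e.2.2 l cnt a) t e.2.2 rest

/-- A consistent interleaving of a `Lang_Atomic` program. -/
structure InterleavingA (P : ProgA Node Mutex Global L V) where
  len : Nat
  states : Fin (len + 1) → Config Node Mutex Global L V
  who : Fin len → TID
  edge : Fin len → Node × ActA Mutex Global L V × Node
  init : IsInitGen P.start P.initLocal P.initGlobal (states 0)
  consistent : ∀ k : Fin len, StepA P (states k.castSucc) (who k) (edge k) (states k.succ)

/-- An assertion (possibly inside an atomic block) is violated at step `k`: it evaluates to
false after executing the preceding statements of the block on the preceding state. -/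
def InterleavingA.ViolatesAt {P : ProgA Node Mutex Global L V} (i : InterleavingA P)
    (k : Fin i.len) : Prop :=
  ∃ tmpl l cnt,
    (i.states k.castSucc).threads (i.who k) = some (tmpl, (i.edge k).1, l, cnt) ∧
    match (i.edge k).2.1 with
    | .base a => ∃ p, a = Act.assert p ∧ p l = false
    | .atomic a rest =>
        (∃ p, a = Act.assert p ∧ p l = false) ∨
        ∃ n p, rest[n]? = some (Act.assert p) ∧
          ∃ tmpl' nd l' cnt',
            ((applyList P.start P.initLocal
                (applyAct P.start P.initLocal (i.states k.castSucc) (i.who k) tmpl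
                  (i.edge k).2.2 l cnt a)
                (i.who k) (i.edge k).2.2 (rest.take n)).threads (i.who k))
              = some (tmpl', nd, l', cnt') ∧ p l' = false

/-- Safety of a `Lang_Atomic` program w.r.t. the interleaving semantics. -/
def SafeA (P : ProgA Node Mutex Global L V) : Prop :=
  ∀ (i : InterleavingA P) (k : Fin i.len), ¬ i.ViolatesAt k

variable {GGlobal GLoc : Type} [DecidableEq GGlobal]

/-- Ghost updates: statements over the extended state that only write ghost locals and
ghost globals (reading program and ghost state is allowed). -/
def GhostUpd : Act Mutex (Global ⊕ GGlobal) (L × GLoc) V → Prop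
  | .localUpd f => ∀ p, (f p).1 = p.1
  | .read _ f => ∀ p v, (f p v).1 = p.1
  | .write g _ => ∃ gg, g = Sum.inr gg
  | _ => False

/-- Ghost statements used to evaluate and assert invariants: ghost updates or asserts. -/
def GhostStmt (b : Act Mutex (Global ⊕ GGlobal) (L × GLoc) V) : Prop :=
  GhostUpd b ∨ ∃ p, b = Act.assert p

/-- A ghost witness `(D_g, X_g, U, I)` for `P`: initial values of fresh ghost globals,
initial ghost local state, ghost updates per edge, and location invariants per node
(given as ghost statement sequences evaluating and asserting the invariant). -/
structure Witness (P : Prog Node Mutex Global L V) (GGlobal GLoc : Type) where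
  ginit : GGlobal → V
  glinit : GLoc
  upd : Nat → Node → Node → Option (List (Act Mutex (Global ⊕ GGlobal) (L × GLoc) V))
  inv : Node → Option (List (Act Mutex (Global ⊕ GGlobal) (L × GLoc) V))

/-- Well-formedness: ghost updates only modify ghost variables; invariant code consists of
ghost statements. -/
def Witness.WF {P : Prog Node Mutex Global L V} (W : Witness P GGlobal GLoc) : Prop :=
  (∀ tmpl u v us, W.upd tmpl u v = some us → ∀ b ∈ us, GhostUpd (GLoc := GLoc) b) ∧
  (∀ u bs, W.inv u = some bs → ∀ b ∈ bs, GhostStmt (GLoc := GLoc) b)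

/-- Lift a program action to the extended (ghost-instrumented) state spaces. -/
def liftAct : Act Mutex Global L V → Act Mutex (Global ⊕ GGlobal) (L × GLoc) V
  | .lock m => .lock m
  | .unlock m => .unlock m
  | .create k => .create k
  | .localUpd f => .localUpd (fun p => (f p.1, p.2))
  | .read g f => .read (.inl g) (fun p v => (f p.1 v, p.2))
  | .write g f => .write (.inl g) (fun p => f p.1)
  | .assert p => .assert (fun q => p q.1)
  | .pos c => .pos (fun q => c q.1)
  | .neg c => .neg (fun q => c q.1)

/-- The atomic block evaluating and asserting an invariant. -/
def invAct : List (Act Mutex (Global ⊕ GGlobal) (L × GLoc) V) →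
    ActA Mutex (Global ⊕ GGlobal) (L × GLoc) V
  | [] => .atomic (.localUpd id) []
  | b :: bs => .atomic b bs

/-- `δ_W`: the instrumented action on an edge — the original action fused atomically with
the ghost updates, if any. -/
def deltaAct {P : Prog Node Mutex Global L V} (W : Witness P GGlobal GLoc)
    (tmpl : Nat) (u v : Node) (a : Act Mutex Global L V) :
    ActA Mutex (Global ⊕ GGlobal) (L × GLoc) V :=
  match W.upd tmpl u v with
  | some us => .atomic (liftAct a) us
  | none => .base (liftAct a)

/-- Source node of the instrumented edge: the new node `(u, v)` if `Ψ_W u` is defined. -/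
def srcNode {P : Prog Node Mutex Global L V} (W : Witness P GGlobal GLoc)
    (u v : Node) : Node ⊕ (Node × Node) :=
  if (W.inv u).isSome then .inr (u, v) else .inl u

/-- The witness-instrumented program `P_W`. -/
def instrument (P : Prog Node Mutex Global L V) (W : Witness P GGlobal GLoc) :
    ProgA (Node ⊕ (Node × Node)) Mutex (Global ⊕ GGlobal) (L × GLoc) V where
  edges := fun tmpl n act n' =>
    (∃ u a v, P.edges tmpl u a v ∧ n = srcNode W u v ∧
        act = deltaAct W tmpl u v a ∧ n' = .inl v) ∨
    (∃ u a v bs, P.edges tmpl u a v ∧ W.inv u = some bs ∧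
        n = .inl u ∧ act = invAct bs ∧ n' = .inr (u, v))
  start := fun k => .inl (P.start k)
  initLocal := (P.initLocal, W.glinit)
  initGlobal := Sum.elim P.initGlobal W.ginit

/-- Project an instrumented node back to the original node. -/
def projNode : Node ⊕ (Node × Node) → Node
  | .inl u => u
  | .inr p => p.1

/-- `π_P`: project a configuration of `P_W` back to a configuration of `P` (remove ghost
variables; keep program variables, mutexes and thread locations). -/
def projConfig (c : Config (Node ⊕ (Node × Node)) Mutex (Global ⊕ GGlobal) (L × GLoc) V) :
    Config Node Mutex Global L V where
  threads := fun t => (c.threads t).map (fun e => (e.1, projNode e.2.1, e.2.2.1.1, e.2.2.2))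
  mutexes := c.mutexes
  globals := fun g => c.globals (.inl g)

/-- A step of an instrumented interleaving is an inserted invariant-assertion step. -/
def IsInvStep {P : Prog Node Mutex Global L V} (W : Witness P GGlobal GLoc)
    (e : (Node ⊕ (Node × Node)) × ActA Mutex (Global ⊕ GGlobal) (L × GLoc) V ×
          (Node ⊕ (Node × Node))) : Prop :=
  ∃ u v bs, W.inv u = some bs ∧ e = (.inl u, invAct bs, .inr (u, v))


end CW

namespace CW

attribute [ext] Config

section Semantics

variable {Node Mutex Global L V : Type} [DecidableEq Mutex] [DecidableEq Global]

lemma applyAct_threads_self (startF : Nat → Node) (l0 : L) (c : Config Node Mutex Global L V)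
    (t : TID) (tmpl : Nat) (v : Node) (l : L) (cnt : Nat) (a : Act Mutex Global L V) :
    ∃ l' cnt', (applyAct startF l0 c t tmpl v l cnt a).threads t = some (tmpl, v, l', cnt') := by
  cases a <;> simp [applyAct]

lemma applyAct_threads_of_ne (startF : Nat → Node) (l0 : L) (c : Config Node Mutex Global L V)
    {s t : TID} (hs : s ≠ t) (tmpl : Nat) (v : Node) (l : L) (cnt : Nat)
    (a : Act Mutex Global L V) :
    (applyAct startF l0 c t tmpl v l cnt a).threads s = c.threads s ∨
      ∃ k, (applyAct startF l0 c t tmpl v l cnt a).threads s = some (k, startF k, l0, 0) := by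
  cases a with
  | create k =>
    by_cases hchild : s = t ++ [cnt]
    · exact .inr ⟨k, by simp [applyAct, hchild]⟩
    · exact .inl (by simp [applyAct, Function.update_of_ne hchild, Function.update_of_ne hs])
  | _ => exact .inl (by simp [applyAct, Function.update_of_ne hs])

lemma applyAct_threads_of_ne_of_simple (startF : Nat → Node) (l0 : L)
    (c : Config Node Mutex Global L V) {s t : TID} (hs : s ≠ t) (tmpl : Nat) (v : Node) (l : L)
    (cnt : Nat) {a : Act Mutex Global L V} (ha : a.Simple) :
    (applyAct startF l0 c t tmpl v l cnt a).threads s = c.threads s := by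
  cases a <;> first | exact ha.elim | simp [applyAct, Function.update_of_ne hs]

lemma applyOne_of_threads_eq (startF : Nat → Node) (l0 : L) {c : Config Node Mutex Global L V}
    {t : TID} {tmpl : Nat} {n : Node} {l : L} {cnt : Nat}
    (h : c.threads t = some (tmpl, n, l, cnt)) (v : Node) (a : Act Mutex Global L V) :
    applyOne startF l0 c t v a = applyAct startF l0 c t tmpl v l cnt a := by
  simp [applyOne, h]

lemma applyOne_of_threads_eq_none (startF : Nat → Node) (l0 : L)
    {c : Config Node Mutex Global L V} {t : TID} (h : c.threads t = none) (v : Node)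
    (a : Act Mutex Global L V) :
    applyOne startF l0 c t v a = c := by
  simp [applyOne, h]

lemma applyList_cons (startF : Nat → Node) (l0 : L) (c : Config Node Mutex Global L V)
    (t : TID) (v : Node) (a : Act Mutex Global L V) (as_ : List (Act Mutex Global L V)) :
    applyList startF l0 c t v (a :: as_) =
      applyList startF l0 (applyOne startF l0 c t v a) t v as_ :=
  rfl

lemma applyList_threads_self (startF : Nat → Node) (l0 : L) (t : TID) (v : Node)
    (as_ : List (Act Mutex Global L V)) {c : Config Node Mutex Global L V} {tmpl : Nat} {l : L}
    {cnt : Nat} (h : c.threads t = some (tmpl, v, l, cnt)) :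
    ∃ l' cnt', (applyList startF l0 c t v as_).threads t = some (tmpl, v, l', cnt') := by
  induction as_ generalizing c l cnt with
  | nil => exact ⟨l, cnt, h⟩
  | cons a as_ ih =>
    obtain ⟨l', cnt', h'⟩ := applyAct_threads_self startF l0 c t tmpl v l cnt a
    rw [applyList_cons, applyOne_of_threads_eq startF l0 h]
    exact ih h'

lemma applyList_threads_of_ne_of_simple (startF : Nat → Node) (l0 : L) {s t : TID} (hs : s ≠ t)
    (v : Node) {as_ : List (Act Mutex Global L V)} (has : ∀ a ∈ as_, a.Simple)
    (c : Config Node Mutex Global L V) :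
    (applyList startF l0 c t v as_).threads s = c.threads s := by
  induction as_ generalizing c with
  | nil => rfl
  | cons a as_ ih =>
    rw [applyList_cons, ih (fun b hb => has b (List.mem_cons_of_mem a hb))]
    cases hc : c.threads t with
    | none => rw [applyOne_of_threads_eq_none startF l0 hc]
    | some x =>
      rw [applyOne_of_threads_eq startF l0 hc]
      exact applyAct_threads_of_ne_of_simple startF l0 c hs _ v _ _ (has a List.mem_cons_self)

def NodesIn (c : Config Node Mutex Global L V) (S : Set Node) : Prop :=
  ∀ s x, c.threads s = some x → x.2.1 ∈ S

lemma nodesIn_applyAct {startF : Nat → Node} (l0 : L) {c : Config Node Mutex Global L V}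
    {t : TID} {S : Set Node} (hc : ∀ s ≠ t, ∀ x, c.threads s = some x → x.2.1 ∈ S)
    (tmpl : Nat) {v : Node} (hv : v ∈ S) (hstart : ∀ k, startF k ∈ S) (l : L) (cnt : Nat)
    (a : Act Mutex Global L V) :
    NodesIn (applyAct startF l0 c t tmpl v l cnt a) S := by
  intro s x hx
  by_cases hs : s = t
  · subst hs
    obtain ⟨l', cnt', h⟩ := applyAct_threads_self startF l0 c s tmpl v l cnt a
    rw [h, Option.some_inj] at hx
    exact hx ▸ hv
  · rcases applyAct_threads_of_ne startF l0 c hs tmpl v l cnt a with h | ⟨k, h⟩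
    · exact hc s hs x (h ▸ hx)
    · rw [h, Option.some_inj] at hx
      exact hx ▸ hstart k

lemma nodesIn_applyList {startF : Nat → Node} (l0 : L) {c : Config Node Mutex Global L V}
    {S : Set Node} (hc : NodesIn c S) (t : TID) {v : Node} (hv : v ∈ S)
    (hstart : ∀ k, startF k ∈ S) (as_ : List (Act Mutex Global L V)) :
    NodesIn (applyList startF l0 c t v as_) S := by
  induction as_ generalizing c with
  | nil => exact hc
  | cons a as_ ih =>
    rw [applyList_cons]
    refine ih ?_
    cases hct : c.threads t with
    | none => rwa [applyOne_of_threads_eq_none startF l0 hct]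
    | some x =>
      rw [applyOne_of_threads_eq startF l0 hct]
      exact nodesIn_applyAct l0 (fun s _ => hc s) _ hv hstart _ _ a

end Semantics

section Ghost

variable {Node Mutex Global L V GGlobal GLoc : Type}

lemma Act.Simple.admissibleAct {a : Act Mutex Global L V} (ha : a.Simple)
    (c : Config Node Mutex Global L V) (t : TID) (l : L) (cnt : Nat) :
    admissibleAct c t l cnt a := by
  cases a <;> first | exact ha.elim | trivial

lemma GhostStmt.simple {b : Act Mutex (Global ⊕ GGlobal) (L × GLoc) V} (hb : GhostStmt b) :
    b.Simple := by
  rcases hb with hb | ⟨p, rfl⟩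
  · cases b <;> first | exact hb.elim | trivial
  · trivial

lemma exists_invAct_eq_atomic {bs : List (Act Mutex (Global ⊕ GGlobal) (L × GLoc) V)}
    (hbs : ∀ b ∈ bs, GhostStmt b) :
    ∃ b rest, invAct bs = .atomic b rest ∧ ∀ b' ∈ b :: rest, GhostStmt b' := by
  cases bs with
  | nil => exact ⟨.localUpd id, [], rfl, by simp [GhostStmt, GhostUpd]⟩
  | cons b rest => exact ⟨b, rest, rfl, hbs⟩

lemma projConfig_threads_of_eq
    {d : Config (Node ⊕ (Node × Node)) Mutex (Global ⊕ GGlobal) (L × GLoc) V} {t : TID}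
    {tmpl : Nat} {n : Node ⊕ (Node × Node)} {lg : L × GLoc} {cnt : Nat}
    (h : d.threads t = some (tmpl, n, lg, cnt)) :
    (projConfig d).threads t = some (tmpl, projNode n, lg.1, cnt) := by
  simp [projConfig, h]

lemma admissibleAct_liftAct
    {d : Config (Node ⊕ (Node × Node)) Mutex (Global ⊕ GGlobal) (L × GLoc) V} {t : TID}
    {lg : L × GLoc} {cnt : Nat} {a : Act Mutex Global L V}
    (h : admissibleAct (projConfig d) t lg.1 cnt a) : admissibleAct d t lg cnt (liftAct a) := by
  cases a <;> simp_all [admissibleAct, liftAct, projConfig]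

variable [DecidableEq Mutex] [DecidableEq Global] [DecidableEq GGlobal]

lemma projConfig_applyAct_ghost (startF : Nat → Node ⊕ (Node × Node)) (l0 : L × GLoc)
    {d : Config (Node ⊕ (Node × Node)) Mutex (Global ⊕ GGlobal) (L × GLoc) V} {t : TID}
    {tmpl : Nat} {n v : Node ⊕ (Node × Node)} {lg : L × GLoc} {cnt : Nat}
    (h : d.threads t = some (tmpl, n, lg, cnt)) (hv : projNode n = projNode v)
    {b : Act Mutex (Global ⊕ GGlobal) (L × GLoc) V} (hb : GhostStmt b) :
    projConfig (applyAct startF l0 d t tmpl v lg cnt b) = projConfig d := by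
  have hthread : ∀ lg' : L × GLoc, lg'.1 = lg.1 →
      (fun s => ((Function.update d.threads t (some (tmpl, v, lg', cnt))) s).map
        (fun e => (e.1, projNode e.2.1, e.2.2.1.1, e.2.2.2))) = (projConfig d).threads := by
    intro lg' hlg
    funext s
    by_cases hs : s = t
    · subst hs
      simp [projConfig, h, hv, hlg]
    · simp [projConfig, hs]
  rcases hb with hb | ⟨p, rfl⟩
  · cases b with
    | localUpd f => exact Config.ext (hthread _ (hb lg)) rfl rfl
    | read g f => exact Config.ext (hthread _ (hb lg _)) rfl rfl
    | write g f =>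
      obtain ⟨gg, rfl⟩ := hb
      exact Config.ext (hthread lg rfl) rfl (funext fun g => by simp [projConfig, applyAct])
    | _ => exact hb.elim
  · exact Config.ext (hthread lg rfl) rfl rfl

lemma projConfig_applyList_ghost (startF : Nat → Node ⊕ (Node × Node)) (l0 : L × GLoc)
    (t : TID) (v : Node ⊕ (Node × Node))
    {bs : List (Act Mutex (Global ⊕ GGlobal) (L × GLoc) V)}
    (hbs : ∀ b ∈ bs, GhostStmt b)
    {d : Config (Node ⊕ (Node × Node)) Mutex (Global ⊕ GGlobal) (L × GLoc) V}
    (h : ∀ x ∈ d.threads t, projNode x.2.1 = projNode v) :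
    projConfig (applyList startF l0 d t v bs) = projConfig d := by
  induction bs generalizing d with
  | nil => rfl
  | cons b bs ih =>
    have hbs' : ∀ b' ∈ bs, GhostStmt b' := fun b' hb' => hbs b' (.tail b hb')
    rw [applyList_cons]
    cases hdt : d.threads t with
    | none => rw [applyOne_of_threads_eq_none startF l0 hdt, ih hbs' h]
    | some x =>
      obtain ⟨tmpl, n, lg, cnt⟩ := x
      obtain ⟨lg', cnt', hself⟩ := applyAct_threads_self startF l0 d t tmpl v lg cnt b
      rw [applyOne_of_threads_eq startF l0 hdt, ih hbs' (by simp [hself])]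
      exact projConfig_applyAct_ghost startF l0 hdt (h _ hdt) (hbs b List.mem_cons_self)

lemma projConfig_applyAct_liftAct (startF : Nat → Node) (l0 : L) (gl0 : GLoc)
    (d : Config (Node ⊕ (Node × Node)) Mutex (Global ⊕ GGlobal) (L × GLoc) V) (t : TID)
    (tmpl : Nat) (v : Node) (lg : L × GLoc) (cnt : Nat) (a : Act Mutex Global L V) :
    projConfig (applyAct (fun k => .inl (startF k)) (l0, gl0) d t tmpl (.inl v) lg cnt (liftAct a))
      = applyAct startF l0 (projConfig d) t tmpl v lg.1 cnt a := by
  cases a <;> ext : 1 <;> funext x <;>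
    simp [projConfig, applyAct, liftAct, Function.update_apply] <;> split_ifs <;> rfl

end Ghost

section Runs

variable {Node Mutex Global L V : Type} [DecidableEq Mutex] [DecidableEq Global]

def InterleavingA.snoc {Q : ProgA Node Mutex Global L V} (j : InterleavingA Q) (t : TID)
    (e : Node × ActA Mutex Global L V × Node) (c' : Config Node Mutex Global L V)
    (h : StepA Q (j.states (Fin.last j.len)) t e c') : InterleavingA Q where
  len := j.len + 1
  states := Fin.snoc j.states c'
  who := Fin.snoc j.who t
  edge := Fin.snoc j.edge e
  init := by
    rw [show (0 : Fin (j.len + 1 + 1)) = Fin.castSucc 0 from rfl, Fin.snoc_castSucc]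
    exact j.init
  consistent := by
    refine Fin.lastCases ?_ fun k => ?_
    · simpa only [Fin.succ_last, Fin.snoc_castSucc, Fin.snoc_last] using h
    · simpa only [Fin.snoc_castSucc, Fin.succ_castSucc] using j.consistent k

def ReachableA (Q : ProgA Node Mutex Global L V) (d : Config Node Mutex Global L V) : Prop :=
  ∃ j : InterleavingA Q, j.states (Fin.last j.len) = d

lemma ReachableA.exists_init (Q : ProgA Node Mutex Global L V) :
    ∃ d, ReachableA Q d ∧ IsInitGen Q.start Q.initLocal Q.initGlobal d := by
  let d : Config Node Mutex Global L V :=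
    { threads := fun t => if t = ([] : TID) then some (0, Q.start 0, Q.initLocal, 0) else none,
      mutexes := fun _ => none
      globals := Q.initGlobal }
  have hinit : IsInitGen Q.start Q.initLocal Q.initGlobal d :=
    ⟨fun _ => rfl, fun _ => rfl, fun _ => rfl⟩
  exact ⟨d, ⟨⟨0, fun _ => d, Fin.elim0, Fin.elim0, hinit, fun k => k.elim0⟩, rfl⟩,
    hinit⟩

lemma ReachableA.exists_run_last_step {Q : ProgA Node Mutex Global L V}
    {d d' : Config Node Mutex Global L V} (hd : ReachableA Q d) {t : TID}
    {e : Node × ActA Mutex Global L V × Node} (h : StepA Q d t e d') :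
    ∃ (j : InterleavingA Q) (k : Fin j.len),
      j.who k = t ∧ j.edge k = e ∧ j.states k.castSucc = d := by
  obtain ⟨j, rfl⟩ := hd
  exact ⟨j.snoc t e d' h, Fin.last j.len, by simp [InterleavingA.snoc]⟩

lemma ReachableA.step {Q : ProgA Node Mutex Global L V} {d d' : Config Node Mutex Global L V}
    (hd : ReachableA Q d) {t : TID} {e : Node × ActA Mutex Global L V × Node}
    (h : StepA Q d t e d') : ReachableA Q d' := by
  obtain ⟨j, rfl⟩ := hd
  exact ⟨j.snoc t e d' h, by simp [InterleavingA.snoc]⟩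

end Runs

section Simulation

variable {Node Mutex Global L V GGlobal GLoc : Type}

/-- The simulation relation. Requiring original (`inl`) nodes excludes states in which a thread
has passed an invariant check but not yet the edge it guards. -/
def IsGhostLift (c : Config Node Mutex Global L V)
    (d : Config (Node ⊕ (Node × Node)) Mutex (Global ⊕ GGlobal) (L × GLoc) V) : Prop :=
  projConfig d = c ∧ NodesIn d (Set.range Sum.inl)

lemma IsGhostLift.threads_eq {c : Config Node Mutex Global L V}
    {d : Config (Node ⊕ (Node × Node)) Mutex (Global ⊕ GGlobal) (L × GLoc) V}
    (hlift : IsGhostLift c d) {t : TID} {tmpl : Nat} {u : Node} {l : L} {cnt : Nat}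
    (hct : c.threads t = some (tmpl, u, l, cnt)) :
    ∃ gl, d.threads t = some (tmpl, .inl u, (l, gl), cnt) := by
  obtain ⟨rfl, hnodes⟩ := hlift
  cases hdt : d.threads t with
  | none => simp [projConfig, hdt] at hct
  | some x =>
    obtain ⟨tmpl', n, ⟨l', gl⟩, cnt'⟩ := x
    obtain ⟨u', rfl⟩ := hnodes t _ hdt
    simp only [projConfig_threads_of_eq hdt, projNode, Option.some_inj, Prod.mk.injEq] at hct
    obtain ⟨rfl, rfl, rfl, rfl⟩ := hct
    exact ⟨gl, rfl⟩

lemma isGhostLift_of_isInit {P : Prog Node Mutex Global L V} (W : Witness P GGlobal GLoc)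
    {c : Config Node Mutex Global L V} (hc : IsInit P c)
    {d : Config (Node ⊕ (Node × Node)) Mutex (Global ⊕ GGlobal) (L × GLoc) V}
    (hd : IsInitGen (instrument P W).start (instrument P W).initLocal
      (instrument P W).initGlobal d) :
    IsGhostLift c d := by
  refine ⟨Config.ext (funext fun s => ?_) (funext fun m => ?_) (funext fun g => ?_), ?_⟩
  · simp only [projConfig, hd.1 s, hc.1 s]
    split_ifs <;> rfl
  · simp [projConfig, hd.2.1 m, hc.2.1 m]
  · simp [projConfig, hd.2.2 (.inl g), hc.2.2 g, instrument]
  · intro s x hx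
    rw [hd.1 s] at hx
    split_ifs at hx
    exact Option.some_inj.mp hx ▸ ⟨_, rfl⟩

variable [DecidableEq Mutex] [DecidableEq Global] [DecidableEq GGlobal]
  {P : Prog Node Mutex Global L V} {W : Witness P GGlobal GLoc}

lemma exists_stepA_invAct (hW : W.WF) {u v : Node}
    {bs : List (Act Mutex (Global ⊕ GGlobal) (L × GLoc) V)} (hinv : W.inv u = some bs)
    {tmpl : Nat} {a : Act Mutex Global L V} (hedge : P.edges tmpl u a v)
    {d : Config (Node ⊕ (Node × Node)) Mutex (Global ⊕ GGlobal) (L × GLoc) V} {t : TID}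
    {lg : L × GLoc} {cnt : Nat} (hdt : d.threads t = some (tmpl, .inl u, lg, cnt)) :
    ∃ d₁, StepA (instrument P W) d t (.inl u, invAct bs, .inr (u, v)) d₁ ∧
      projConfig d₁ = projConfig d ∧ (∀ s ≠ t, d₁.threads s = d.threads s) ∧
      ∃ gl, d₁.threads t = some (tmpl, .inr (u, v), (lg.1, gl), cnt) := by
  obtain ⟨b, rest, hbs, hghost⟩ := exists_invAct_eq_atomic (hW.2 u bs hinv)
  have hb := hghost b List.mem_cons_self
  have hrest : ∀ b' ∈ rest, GhostStmt b' := fun b' hb' => hghost b' (.tail b hb')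
  set Q := instrument P W
  set e := applyAct Q.start Q.initLocal d t tmpl (.inr (u, v)) lg cnt b
  obtain ⟨lg', cnt', het⟩ :=
    applyAct_threads_self Q.start Q.initLocal d t tmpl (.inr (u, v)) lg cnt b
  obtain ⟨lg₁, cnt₁, hd₁t⟩ :=
    applyList_threads_self Q.start Q.initLocal t (.inr (u, v)) rest het
  have hproj :
      projConfig (applyList Q.start Q.initLocal e t (.inr (u, v)) rest) = projConfig d := by
    rw [projConfig_applyList_ghost _ _ _ _ hrest (by simp [e, het]),
      projConfig_applyAct_ghost (v := .inr (u, v)) _ _ hdt rfl hb]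
  refine ⟨applyList Q.start Q.initLocal e t (.inr (u, v)) rest,
    ⟨tmpl, lg, cnt, hdt, .inr ⟨u, a, v, bs, hedge, hinv, rfl, rfl, rfl⟩, ?_⟩, hproj,
    fun s hs => ?_, ?_⟩
  · rw [hbs]
    exact ⟨hb.simple.admissibleAct d t lg cnt, fun b' hb' => (hrest b' hb').simple, rfl⟩
  · rw [applyList_threads_of_ne_of_simple _ _ hs _ (fun b' hb' => (hrest b' hb').simple)]
    exact applyAct_threads_of_ne_of_simple _ _ d hs _ _ _ _ hb.simple
  · have := projConfig_threads_of_eq hd₁t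
    rw [hproj, projConfig_threads_of_eq hdt] at this
    simp only [projNode, Option.some_inj, Prod.mk.injEq] at this
    obtain ⟨-, -, hl, hcnt⟩ := this
    exact ⟨lg₁.2, by rw [hd₁t, hl, hcnt]⟩

lemma exists_stepA_deltaAct (hW : W.WF) {tmpl : Nat} {u v : Node} {a : Act Mutex Global L V}
    (hedge : P.edges tmpl u a v)
    {d : Config (Node ⊕ (Node × Node)) Mutex (Global ⊕ GGlobal) (L × GLoc) V} {t : TID}
    {l : L} {gl : GLoc} {cnt : Nat} (hdt : d.threads t = some (tmpl, srcNode W u v, (l, gl), cnt))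
    (hnodes : ∀ s ≠ t, ∀ x, d.threads s = some x → x.2.1 ∈ Set.range Sum.inl)
    (hadm : admissibleAct (projConfig d) t l cnt a) :
    ∃ d₂, StepA (instrument P W) d t (srcNode W u v, deltaAct W tmpl u v a, .inl v) d₂ ∧
      IsGhostLift (applyAct P.start P.initLocal (projConfig d) t tmpl v l cnt a) d₂ := by
  set Q := instrument P W
  set e := applyAct Q.start Q.initLocal d t tmpl (.inl v) (l, gl) cnt (liftAct a)
  have hstart : ∀ k, Q.start k ∈ Set.range Sum.inl := fun k => ⟨_, rfl⟩
  have he : IsGhostLift (applyAct P.start P.initLocal (projConfig d) t tmpl v l cnt a) e :=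
    ⟨projConfig_applyAct_liftAct _ _ _ _ _ _ _ _ _ _,
      nodesIn_applyAct _ hnodes _ ⟨v, rfl⟩ hstart _ _ _⟩
  have hedge' : Q.edges tmpl (srcNode W u v) (deltaAct W tmpl u v a) (.inl v) :=
    .inl ⟨u, a, v, hedge, rfl, rfl, rfl⟩
  have hadm' := admissibleAct_liftAct (lg := (l, gl)) hadm
  cases hupd : W.upd tmpl u v with
  | none =>
    refine ⟨e, ⟨tmpl, (l, gl), cnt, hdt, hedge', ?_⟩, he⟩
    simp only [deltaAct, hupd]
    exact ⟨hadm', rfl⟩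
  | some us =>
    have hus : ∀ b ∈ us, GhostStmt b := fun b hb => .inl (hW.1 tmpl u v us hupd b hb)
    obtain ⟨lg', cnt', het⟩ :=
      applyAct_threads_self Q.start Q.initLocal d t tmpl (.inl v) (l, gl) cnt (liftAct a)
    refine ⟨applyList Q.start Q.initLocal e t (.inl v) us,
      ⟨tmpl, (l, gl), cnt, hdt, hedge', ?_⟩, ?_,
      nodesIn_applyList _ he.2 t ⟨v, rfl⟩ hstart us⟩
    · simp only [deltaAct, hupd]
      exact ⟨hadm', fun b hb => (hus b hb).simple, rfl⟩
    · rw [projConfig_applyList_ghost _ _ _ _ hus (by simp [e, het])]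
      exact he.1

lemma IsGhostLift.exists_step (hW : W.WF) {c : Config Node Mutex Global L V}
    {d : Config (Node ⊕ (Node × Node)) Mutex (Global ⊕ GGlobal) (L × GLoc) V}
    (hlift : IsGhostLift c d) {t : TID} {tmpl : Nat} {u v : Node} {l : L} {cnt : Nat}
    {a : Act Mutex Global L V} (hct : c.threads t = some (tmpl, u, l, cnt))
    (hedge : P.edges tmpl u a v) (hadm : admissibleAct c t l cnt a) :
    ∃ d₁ gl, (ReachableA (instrument P W) d → ReachableA (instrument P W) d₁) ∧
      d₁.threads t = some (tmpl, srcNode W u v, (l, gl), cnt) ∧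
      ∃ d₂,
        StepA (instrument P W) d₁ t (srcNode W u v, deltaAct W tmpl u v a, .inl v) d₂ ∧
        IsGhostLift (applyAct P.start P.initLocal c t tmpl v l cnt a) d₂ := by
  obtain ⟨gl, hdt⟩ := hlift.threads_eq hct
  obtain ⟨d₁, hreach, hproj, hframe, gl₁, hd₁t⟩ :
      ∃ d₁, (ReachableA (instrument P W) d → ReachableA (instrument P W) d₁) ∧
        projConfig d₁ = c ∧ (∀ s ≠ t, d₁.threads s = d.threads s) ∧
        ∃ gl₁, d₁.threads t = some (tmpl, srcNode W u v, (l, gl₁), cnt) := by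
    cases hinv : W.inv u with
    | none => exact ⟨d, id, hlift.1, fun _ _ => rfl, gl, by simpa [srcNode, hinv] using hdt⟩
    | some bs =>
      obtain ⟨d₁, hstep, hproj, hframe, gl₁, hd₁t⟩ :=
        exists_stepA_invAct hW hinv hedge hdt
      exact ⟨d₁, fun hd => hd.step hstep, hproj.trans hlift.1, hframe, gl₁,
        by simpa [srcNode, hinv] using hd₁t⟩
  obtain ⟨d₂, hstep, hlift₂⟩ := exists_stepA_deltaAct hW hedge hd₁t
    (fun s hs x hx => hlift.2 s x (hframe s hs ▸ hx)) (hproj ▸ hadm)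
  exact ⟨d₁, gl₁, hreach, hd₁t, d₂, hstep, hproj ▸ hlift₂⟩

lemma exists_reachableA_isGhostLift (hW : W.WF) (i : Interleaving P) (k : Fin (i.len + 1)) :
    ∃ d, ReachableA (instrument P W) d ∧ IsGhostLift (i.states k) d := by
  induction k using Fin.induction with
  | zero =>
    obtain ⟨d, hd, hinit⟩ := ReachableA.exists_init (instrument P W)
    exact ⟨d, hd, isGhostLift_of_isInit W i.init hinit⟩
  | succ k ih =>
    obtain ⟨d, hd, hlift⟩ := ih
    obtain ⟨tmpl, l, cnt, hct, hedge, hadm, hnext⟩ := i.consistent k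
    obtain ⟨d₁, -, hreach, -, d₂, hstep, hlift₂⟩ := hlift.exists_step hW hct hedge hadm
    exact ⟨d₂, (hreach hd).step hstep, hnext ▸ hlift₂⟩

lemma InterleavingA.violatesAt_of_deltaAct_assert (j : InterleavingA (instrument P W))
    (k : Fin j.len) {tmpl : Nat} {u v : Node} {p : L → Bool}
    (hedge : j.edge k = (srcNode W u v, deltaAct W tmpl u v (.assert p), .inl v))
    {l : L} {gl : GLoc} {cnt : Nat}
    (hthread : (j.states k.castSucc).threads (j.who k) = some (tmpl, srcNode W u v, (l, gl), cnt))
    (hp : p l = false) :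
    j.ViolatesAt k := by
  refine ⟨tmpl, (l, gl), cnt, by rw [hedge, hthread], ?_⟩
  rw [hedge]
  cases hupd : W.upd tmpl u v with
  | none =>
    simp only [deltaAct, hupd, liftAct]
    exact ⟨_, rfl, hp⟩
  | some _ =>
    simp only [deltaAct, hupd, liftAct]
    exact .inl ⟨_, rfl, hp⟩

lemma Interleaving.ViolatesAt.exists_violatesAt (hW : W.WF) {i : Interleaving P}
    {k : Fin i.len} (hviol : i.ViolatesAt k) {p : L → Bool} {u v : Node}
    (hedge : i.edge k = (u, .assert p, v)) :
    ∃ (j : InterleavingA (instrument P W)) (k' : Fin j.len) (tmpl : Nat),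
      j.who k' = i.who k ∧
      j.edge k' = (srcNode W u v, deltaAct W tmpl u v (.assert p), .inl v) ∧
      j.ViolatesAt k' := by
  obtain ⟨tmpl, l, cnt, hct, hedgeP, hadm, -⟩ := i.consistent k
  rw [hedge] at hct hedgeP hadm
  have hp : p l = false := by
    obtain ⟨p', u', v', hedge', tmpl', l', cnt', hct', hp'⟩ := hviol
    rw [hedge, Prod.mk.injEq, Prod.mk.injEq, Act.assert.injEq] at hedge'
    obtain ⟨rfl, rfl, rfl⟩ := hedge'
    rw [hct] at hct'
    simp only [Option.some_inj, Prod.mk.injEq] at hct'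
    exact hct'.2.2.1 ▸ hp'
  obtain ⟨d, hd, hlift⟩ := exists_reachableA_isGhostLift hW i k.castSucc
  obtain ⟨d₁, gl, hreach, hd₁t, d₂, hstep, -⟩ := hlift.exists_step hW hct hedgeP hadm
  obtain ⟨j, k', hwho, hedge', hstate⟩ := (hreach hd).exists_run_last_step hstep
  exact ⟨j, k', tmpl, hwho, hedge',
    j.violatesAt_of_deltaAct_assert k' hedge' (by rw [hstate, hwho]; exact hd₁t) hp⟩

end Simulation

variable {Node Mutex Global L V : Type} [DecidableEq Mutex] [DecidableEq Global]
  {GGlobal GLoc : Type} [DecidableEq GGlobal]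

/-- Violation preservation: if an interleaving of `P` violates an
assertion at an edge `(u, assert p, v)` taken by thread `t`, then some interleaving of the
witness-instrumented program `P_W` violates the same assertion at the edge
`δ_W (u, assert p, v)` taken by `t`. Consequently, if the ghost witness `W` is valid
(`P_W` is safe w.r.t. interleaving semantics), then `P` is safe. -/
theorem violation_preservation
    (P : Prog Node Mutex Global L V) (W : Witness P GGlobal GLoc) (hW : W.WF) :
    (∀ (i : Interleaving P) (k : Fin i.len) (p : L → Bool) (u v : Node),
      i.edge k = (u, Act.assert p, v) →
      i.ViolatesAt k →
      ∃ (i' : InterleavingA (instrument P W)) (k' : Fin i'.len) (tmpl : Nat),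
        i'.who k' = i.who k ∧
        i'.edge k' = (srcNode W u v, deltaAct W tmpl u v (Act.assert p), Sum.inl v) ∧
        i'.ViolatesAt k') ∧
    (SafeA (instrument P W) → Safe P) := by
  refine ⟨fun i k p u v hedge hviol => hviol.exists_violatesAt hW hedge,
    fun hsafe i k hviol => ?_⟩
  have ⟨p, u, v, hedge, _⟩ := hviol
  obtain ⟨j, k', -, -, -, hj⟩ := hviol.exists_violatesAt hW hedge
  exact hsafe j k' hj

end CW
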